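/- The quotient ℂ-algebra U(sl₂(ℂ))/I is five-dimensional over ℂ, and the images of the elements 1, ι(e), ι(f), ι(h), and ι(f)·ι(e) form a ℂ-basis of U(sl₂(ℂ))/I. -/

import Mathlib

set_option maxHeartbeats 1000000
set_option synthInstance.maxHeartbeats 400000

open LieAlgebra.SpecialLinear

attribute [local instance 100] LieRing.ofAssociativeRing

/-- The standard basis element `e = E₁₂` of `sl₂(ℂ)`. -/
noncomputable def Esl : sl (Fin 2) ℂ := single 0 1 (by decide) 1

/-- The standard basis element `f = E₂₁` of `sl₂(ℂ)`. -/
noncomputable def Fsl : sl (Fin 2) ℂ := single 1 0 (by decide) 1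

/-- The standard basis element `h = E₁₁ − E₂₂` of `sl₂(ℂ)`. -/
noncomputable def Hsl : sl (Fin 2) ℂ :=
  ⟨Matrix.single 0 0 1 - Matrix.single 1 1 1,
    show _ ∈ LinearMap.ker (Matrix.traceLinearMap (Fin 2) ℂ ℂ) by
      rw [LinearMap.mem_ker, map_sub]
      simp [Matrix.traceLinearMap, Matrix.trace_single_eq_same]⟩

/-- The universal enveloping algebra of `sl₂(ℂ)`. -/
noncomputable abbrev Usl2 := UniversalEnvelopingAlgebra ℂ (sl (Fin 2) ℂ)

/-- The canonical map `ι : sl₂(ℂ) → U(sl₂(ℂ))`. -/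
noncomputable def iotaU : sl (Fin 2) ℂ →ₗ⁅ℂ⁆ Usl2 := UniversalEnvelopingAlgebra.ι ℂ

/-- The relation identifying `ι(e)²` with `0`; the associated `RingQuot` is the quotient
of `U(sl₂(ℂ))` by the two-sided ideal `I` generated by `ι(e)²`. -/
inductive relE : Usl2 → Usl2 → Prop
  | ee : relE (iotaU Esl * iotaU Esl) 0

/-- The quotient algebra `U(sl₂(ℂ))/I`. -/
noncomputable abbrev Qsl2 := RingQuot relE

/-- The quotient map `U(sl₂(ℂ)) → U(sl₂(ℂ))/I`. -/
noncomputable def qmap : Usl2 →ₐ[ℂ] Qsl2 := RingQuot.mkAlgHom ℂ relE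

/-- The images of `1, ι(e), ι(f), ι(h), ι(f)·ι(e)` in `U(sl₂(ℂ))/I`. -/
noncomputable def basisFam : Fin 5 → Qsl2 :=
  ![1, qmap (iotaU Esl), qmap (iotaU Fsl), qmap (iotaU Hsl),
    qmap (iotaU Fsl) * qmap (iotaU Esl)]

/-! ### Auxiliary lemmas -/

@[simp] lemma sl_coe_smul (c : ℂ) (x : sl (Fin 2) ℂ) :
    ((c • x : sl (Fin 2) ℂ) : Matrix (Fin 2) (Fin 2) ℂ) = c • (x : Matrix (Fin 2) (Fin 2) ℂ) := rfl

lemma brEF : ⁅Esl, Fsl⁆ = Hsl := by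
  apply Subtype.ext
  rw [sl_bracket]
  ext i j
  fin_cases i <;> fin_cases j <;>
    simp [Matrix.mul_apply, Matrix.single, Fin.sum_univ_two, Hsl, Esl, Fsl]

lemma brHE : ⁅Hsl, Esl⁆ = (2:ℂ) • Esl := by
  apply Subtype.ext
  rw [sl_bracket, sl_coe_smul]
  ext i j
  fin_cases i <;> fin_cases j <;>
    simp [Matrix.smul_apply, Matrix.mul_apply, Matrix.single,
      Fin.sum_univ_two, Hsl, Esl] <;> norm_num

lemma brHF : ⁅Hsl, Fsl⁆ = (-2:ℂ) • Fsl := by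
  apply Subtype.ext
  rw [sl_bracket, sl_coe_smul]
  ext i j
  fin_cases i <;> fin_cases j <;>
    simp [Matrix.smul_apply, Matrix.mul_apply, Matrix.single,
      Fin.sum_univ_two, Hsl, Fsl] <;> norm_num

lemma decompose (x : sl (Fin 2) ℂ) :
    x = x.val 0 1 • Esl + x.val 1 0 • Fsl + x.val 0 0 • Hsl := by
  have htr : x.val 0 0 + x.val 1 1 = 0 := by
    have h2 : Matrix.trace x.val = 0 := x.2
    rwa [Matrix.trace_fin_two] at h2
  apply Subtype.ext
  show x.val = (x.val 0 1 • Esl + x.val 1 0 • Fsl + x.val 0 0 • Hsl : sl (Fin 2) ℂ).val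
  rw [AddMemClass.coe_add, AddMemClass.coe_add, sl_coe_smul, sl_coe_smul, sl_coe_smul]
  ext i j
  fin_cases i <;> fin_cases j <;>
    simp [Matrix.smul_apply, Matrix.single, Hsl, Esl, Fsl] <;>
    linear_combination htr

section AbstractRelations
variable {A : Type*} [Ring A] [Algebra ℂ A]

lemma half {x : A} (h : x + x = 0) : x = 0 := by
  have h2 : (2:ℂ) • x = 0 := by rw [two_smul]; exact h
  simpa using (smul_eq_zero.mp h2).resolve_left (by norm_num)

lemma sixth {x : A} (h : x+x+x+x+x+x = 0) : x = 0 := by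
  have h6 : (6:ℂ) • x = 0 := by
    rw [show (6:ℂ) = 1+1+1+1+1+1 by norm_num, add_smul, add_smul, add_smul, add_smul, add_smul,
      one_smul]
    simpa [add_assoc] using h
  simpa using (smul_eq_zero.mp h6).resolve_left (by norm_num)

variable {E F H : A}
variable (hEE : E*E = 0) (h1 : E*F - F*E = H) (h2 : H*E - E*H = E + E)
  (h3 : H*F - F*H = -F - F)

include hEE h1 h2 h3

set_option linter.unusedSectionVars false

lemma d1 : E*H = -E := by
  have t : (E*H + E) + (E*H + E) = 0 := by
    linear_combination (norm := noncomm_ring) -(F*hEE) + hEE*F - h1*E - E*h1 - h2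
  exact eq_neg_of_add_eq_zero_left (half t)

lemma d2 : H*E = E := by
  linear_combination (norm := noncomm_ring) h2 + d1 hEE h1 h2 h3

lemma d3 : H*H = F*E + F*E + H := by
  have d1' := d1 hEE h1 h2 h3
  linear_combination (norm := noncomm_ring) -(F*d1') + d1'*F - h1*H - E*h3 + h1

lemma d4 : F*H = F := by
  have d3' := d3 hEE h1 h2 h3
  have t : (F*H - F)+(F*H - F)+(F*H - F)+(F*H - F)+(F*H - F)+(F*H - F) = 0 := by
    linear_combination (norm := noncomm_ring) F*d3' - d3'*F + h3*H - 3*h3 + H*h3 - 2*(F*h1)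
  exact sub_eq_zero.mp (sixth t)

lemma d6 : F*F = 0 := by
  have d4' := d4 hEE h1 h2 h3
  have t : F*F + F*F = 0 := by
    linear_combination (norm := noncomm_ring) F*d4' - d4'*F + F*h3
  exact half t

lemma d5 : H*F = -F := by
  linear_combination (norm := noncomm_ring) h3 + d4 hEE h1 h2 h3

lemma pEP : E*(F*E) = E := by
  linear_combination (norm := noncomm_ring) F*hEE + h1*E + d2 hEE h1 h2 h3

lemma pFP : F*(F*E) = 0 := by
  linear_combination (norm := noncomm_ring) (d6 hEE h1 h2 h3)*E

lemma pHP : H*(F*E) = -(F*E) := by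
  linear_combination (norm := noncomm_ring) h3*E + F*(d2 hEE h1 h2 h3)

lemma pPE : (F*E)*E = 0 := by
  linear_combination (norm := noncomm_ring) F*hEE

lemma pPF : (F*E)*F = F := by
  linear_combination (norm := noncomm_ring) F*h1 + (d6 hEE h1 h2 h3)*E + d4 hEE h1 h2 h3

lemma pPH : (F*E)*H = -(F*E) := by
  linear_combination (norm := noncomm_ring) F*(d1 hEE h1 h2 h3)

lemma pPP : (F*E)*(F*E) = F*E := by
  linear_combination (norm := noncomm_ring) F*(pEP hEE h1 h2 h3)

lemma pEF : E*F = F*E + H := by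
  linear_combination (norm := noncomm_ring) h1

end AbstractRelations

/-! ### Relations in `U` and in `Q` -/

lemma uEF : iotaU Esl * iotaU Fsl - iotaU Fsl * iotaU Esl = iotaU Hsl := by
  rw [← Ring.lie_def, ← LieHom.map_lie, brEF]

lemma uHE : iotaU Hsl * iotaU Esl - iotaU Esl * iotaU Hsl = iotaU Esl + iotaU Esl := by
  rw [← Ring.lie_def, ← LieHom.map_lie, brHE, map_smul, two_smul]

lemma uHF : iotaU Hsl * iotaU Fsl - iotaU Fsl * iotaU Hsl = -iotaU Fsl - iotaU Fsl := by
  rw [← Ring.lie_def, ← LieHom.map_lie, brHF, map_smul]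
  rw [show (-2:ℂ) = -(1+1) by norm_num, neg_smul, add_smul, one_smul]
  abel

noncomputable abbrev EQ : Qsl2 := qmap (iotaU Esl)
noncomputable abbrev FQ : Qsl2 := qmap (iotaU Fsl)
noncomputable abbrev HQ : Qsl2 := qmap (iotaU Hsl)

lemma qEE : EQ * EQ = 0 := by
  rw [← map_mul]
  have h := RingQuot.mkAlgHom_rel ℂ relE.ee
  simpa [qmap] using h

lemma q1 : EQ*FQ - FQ*EQ = HQ := by
  rw [← map_mul qmap, ← map_mul qmap, ← map_sub qmap, uEF]

lemma q2 : HQ*EQ - EQ*HQ = EQ + EQ := by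
  rw [← map_mul qmap, ← map_mul qmap, ← map_sub qmap, uHE, map_add]

lemma q3 : HQ*FQ - FQ*HQ = -FQ - FQ := by
  rw [← map_mul qmap, ← map_mul qmap, ← map_sub qmap, uHF, map_sub, map_neg]

/-! ### Generation of `U` by the image of `ι` -/

noncomputable def Sadj : Subalgebra ℂ Usl2 :=
  Algebra.adjoin ℂ (Set.range (iotaU : sl (Fin 2) ℂ → Usl2))

noncomputable def gAdj : sl (Fin 2) ℂ →ₗ⁅ℂ⁆ Sadj where
  toFun x := ⟨iotaU x, Algebra.subset_adjoin ⟨x, rfl⟩⟩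
  map_add' x y := Subtype.ext (iotaU.map_add x y)
  map_smul' c x := Subtype.ext (map_smul iotaU c x)
  map_lie' := by
    intro x y
    apply Subtype.ext
    show (iotaU ⁅x, y⁆ : Usl2) = _
    rw [LieHom.map_lie, Ring.lie_def, Ring.lie_def]
    simp only [AddSubgroupClass.coe_sub, MulMemClass.coe_mul]

lemma adjoin_iota_top : Algebra.adjoin ℂ (Set.range (iotaU : sl (Fin 2) ℂ → Usl2)) = ⊤ := by
  have hS : Algebra.adjoin ℂ (Set.range (iotaU : sl (Fin 2) ℂ → Usl2)) = Sadj := rfl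
  rw [hS]
  set S := Sadj with hS2
  set g := gAdj with hg
  have key : ∀ u : Usl2, S.val (UniversalEnvelopingAlgebra.lift ℂ g u) = u := by
    intro u
    have : S.val.comp (UniversalEnvelopingAlgebra.lift ℂ g) = AlgHom.id ℂ Usl2 := by
      apply UniversalEnvelopingAlgebra.hom_ext
      apply LieHom.ext
      intro x
      show S.val (UniversalEnvelopingAlgebra.lift ℂ g (UniversalEnvelopingAlgebra.ι ℂ x)) = _
      rw [UniversalEnvelopingAlgebra.lift_ι_apply]
      rfl
    calc S.val (UniversalEnvelopingAlgebra.lift ℂ g u)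
        = (S.val.comp (UniversalEnvelopingAlgebra.lift ℂ g)) u := rfl
      _ = u := by rw [this]; rfl
  rw [eq_top_iff]
  intro u _
  rw [← key u]
  exact (UniversalEnvelopingAlgebra.lift ℂ g u).2

/-! ### Spanning -/

lemma span_basisFam_top : Submodule.span ℂ (Set.range basisFam) = ⊤ := by
  set S := Submodule.span ℂ (Set.range basisFam) with hSdef
  have mem0 : (1 : Qsl2) ∈ S := Submodule.subset_span ⟨0, rfl⟩
  have mem1 : EQ ∈ S := Submodule.subset_span ⟨1, rfl⟩
  have mem2 : FQ ∈ S := Submodule.subset_span ⟨2, rfl⟩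
  have mem3 : HQ ∈ S := Submodule.subset_span ⟨3, rfl⟩
  have mem4 : FQ * EQ ∈ S := Submodule.subset_span ⟨4, rfl⟩
  have hmul : ∀ a ∈ S, ∀ b ∈ S, a * b ∈ S := by
    intro a ha b hb
    induction ha, hb using Submodule.span_induction₂ with
    | mem_mem x y hx hy =>
      obtain ⟨i, rfl⟩ := hx
      obtain ⟨j, rfl⟩ := hy
      fin_cases i <;> fin_cases j
      · show (1:Qsl2) * 1 ∈ S; rw [one_mul]; exact mem0
      · show (1:Qsl2) * EQ ∈ S; rw [one_mul]; exact mem1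
      · show (1:Qsl2) * FQ ∈ S; rw [one_mul]; exact mem2
      · show (1:Qsl2) * HQ ∈ S; rw [one_mul]; exact mem3
      · show (1:Qsl2) * (FQ * EQ) ∈ S; rw [one_mul]; exact mem4
      · show EQ * 1 ∈ S; rw [mul_one]; exact mem1
      · show EQ * EQ ∈ S; rw [qEE]; exact S.zero_mem
      · show EQ * FQ ∈ S; rw [pEF qEE q1 q2 q3]; exact S.add_mem mem4 mem3
      · show EQ * HQ ∈ S; rw [d1 qEE q1 q2 q3]; exact S.neg_mem mem1
      · show EQ * (FQ * EQ) ∈ S; rw [pEP qEE q1 q2 q3]; exact mem1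
      · show FQ * 1 ∈ S; rw [mul_one]; exact mem2
      · show FQ * EQ ∈ S; exact mem4
      · show FQ * FQ ∈ S; rw [d6 qEE q1 q2 q3]; exact S.zero_mem
      · show FQ * HQ ∈ S; rw [d4 qEE q1 q2 q3]; exact mem2
      · show FQ * (FQ * EQ) ∈ S; rw [pFP qEE q1 q2 q3]; exact S.zero_mem
      · show HQ * 1 ∈ S; rw [mul_one]; exact mem3
      · show HQ * EQ ∈ S; rw [d2 qEE q1 q2 q3]; exact mem1
      · show HQ * FQ ∈ S; rw [d5 qEE q1 q2 q3]; exact S.neg_mem mem2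
      · show HQ * HQ ∈ S; rw [d3 qEE q1 q2 q3]; exact S.add_mem (S.add_mem mem4 mem4) mem3
      · show HQ * (FQ * EQ) ∈ S; rw [pHP qEE q1 q2 q3]; exact S.neg_mem mem4
      · show (FQ * EQ) * 1 ∈ S; rw [mul_one]; exact mem4
      · show (FQ * EQ) * EQ ∈ S; rw [pPE qEE q1 q2 q3]; exact S.zero_mem
      · show (FQ * EQ) * FQ ∈ S; rw [pPF qEE q1 q2 q3]; exact mem2
      · show (FQ * EQ) * HQ ∈ S; rw [pPH qEE q1 q2 q3]; exact S.neg_mem mem4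
      · show (FQ * EQ) * (FQ * EQ) ∈ S; rw [pPP qEE q1 q2 q3]; exact mem4
    | zero_left y hy => rw [zero_mul]; exact S.zero_mem
    | zero_right x hx => rw [mul_zero]; exact S.zero_mem
    | add_left x y z hx hy hz ihx ihy => rw [add_mul]; exact S.add_mem ihx ihy
    | add_right x y z hx hy hz ihx ihy => rw [mul_add]; exact S.add_mem ihx ihy
    | smul_left c x y hx hy ih => rw [smul_mul_assoc]; exact S.smul_mem c ih
    | smul_right c x y hx hy ih => rw [mul_smul_comm]; exact S.smul_mem c ih
  have hq : ∀ u : Usl2, qmap u ∈ S := by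
    intro u
    have hu : u ∈ Algebra.adjoin ℂ (Set.range (iotaU : sl (Fin 2) ℂ → Usl2)) := by
      rw [adjoin_iota_top]; trivial
    induction hu using Algebra.adjoin_induction with
    | mem x hx =>
      obtain ⟨y, rfl⟩ := hx
      rw [decompose y, map_add iotaU, map_add iotaU, map_smul iotaU, map_smul iotaU,
        map_smul iotaU, map_add, map_add, map_smul, map_smul, map_smul]
      exact S.add_mem (S.add_mem (S.smul_mem _ mem1) (S.smul_mem _ mem2)) (S.smul_mem _ mem3)
    | algebraMap r =>
      rw [AlgHom.commutes, Algebra.algebraMap_eq_smul_one]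
      exact S.smul_mem r mem0
    | add x y hx hy ihx ihy => rw [map_add]; exact S.add_mem ihx ihy
    | mul x y hx hy ihx ihy => rw [map_mul]; exact hmul _ ihx _ ihy
  rw [eq_top_iff]
  rintro x -
  obtain ⟨u, rfl⟩ := RingQuot.mkAlgHom_surjective ℂ relE x
  exact hq u

/-! ### A five-dimensional representation, for linear independence -/

noncomputable abbrev Arep := Matrix (Fin 2) (Fin 2) ℂ × ℂ

noncomputable def rho : sl (Fin 2) ℂ →ₗ⁅ℂ⁆ Arep where
  toFun x := (x.val, 0)
  map_add' x y := by ext <;> simp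
  map_smul' c x := by ext <;> simp
  map_lie' := by
    intro x y
    have : (⁅x, y⁆ : sl (Fin 2) ℂ).val = x.val * y.val - y.val * x.val := sl_bracket (Fin 2) ℂ x y
    rw [Ring.lie_def]
    ext : 1
    · simpa using this
    · simp

noncomputable def phi0 : Usl2 →ₐ[ℂ] Arep := UniversalEnvelopingAlgebra.lift ℂ rho

lemma phi0_ee : phi0 (iotaU Esl * iotaU Esl) = phi0 0 := by
  rw [map_mul, map_zero]
  show phi0 (UniversalEnvelopingAlgebra.ι ℂ Esl) * phi0 (UniversalEnvelopingAlgebra.ι ℂ Esl) = 0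
  rw [phi0, UniversalEnvelopingAlgebra.lift_ι_apply]
  ext : 1
  · show (Esl.val * Esl.val : Matrix (Fin 2) (Fin 2) ℂ) = 0
    show (Matrix.single 0 1 1 * Matrix.single 0 1 1 : Matrix (Fin 2) (Fin 2) ℂ) = 0
    rw [Matrix.single_mul_single_of_ne]
    decide
  · simp [rho]

noncomputable def phi : Qsl2 →ₐ[ℂ] Arep :=
  RingQuot.liftAlgHom ℂ ⟨phi0, by rintro a b ⟨⟩; exact phi0_ee⟩

lemma phi_qmap (u : Usl2) : phi (qmap u) = phi0 u := by
  rw [qmap, phi, RingQuot.liftAlgHom_mkAlgHom_apply]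

lemma phi_iota (x : sl (Fin 2) ℂ) : phi (qmap (iotaU x)) = (x.val, 0) := by
  rw [phi_qmap, phi0, iotaU, UniversalEnvelopingAlgebra.lift_ι_apply]
  rfl

lemma li_basisFam : LinearIndependent ℂ basisFam := by
  apply LinearIndependent.of_comp phi.toLinearMap
  rw [Fintype.linearIndependent_iff]
  intro c hc
  have hc5 : c 0 • phi (basisFam 0) + c 1 • phi (basisFam 1) + c 2 • phi (basisFam 2)
      + c 3 • phi (basisFam 3) + c 4 • phi (basisFam 4) = 0 := by
    simpa [Fin.sum_univ_five] using hc
  have e0 : phi (basisFam 0) = (1, 1) := by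
    show phi 1 = (1, 1)
    rw [map_one]; rfl
  have e1 : phi (basisFam 1) = (Matrix.single 0 1 1, 0) := by
    show phi (qmap (iotaU Esl)) = _
    rw [phi_iota]; rfl
  have e2 : phi (basisFam 2) = (Matrix.single 1 0 1, 0) := by
    show phi (qmap (iotaU Fsl)) = _
    rw [phi_iota]; rfl
  have e3 : phi (basisFam 3) = (Matrix.single 0 0 1 - Matrix.single 1 1 1, 0) := by
    show phi (qmap (iotaU Hsl)) = _
    rw [phi_iota]; rfl
  have e4 : phi (basisFam 4) = (Matrix.single 1 1 1, 0) := by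
    show phi (qmap (iotaU Fsl) * qmap (iotaU Esl)) = _
    rw [map_mul, phi_iota, phi_iota]
    ext : 1
    · show (Fsl.val * Esl.val : Matrix (Fin 2) (Fin 2) ℂ) = _
      show (Matrix.single 1 0 1 * Matrix.single 0 1 1 : Matrix (Fin 2) (Fin 2) ℂ) = _
      rw [Matrix.single_mul_single_same, one_mul]
    · simp
  rw [e0, e1, e2, e3, e4] at hc5
  have hsnd := congrArg Prod.snd hc5
  simp at hsnd
  have hfst := congrArg Prod.fst hc5
  simp only [Prod.fst_add, Prod.smul_fst] at hfst
  have h01 := congrFun (congrFun hfst 0) 1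
  have h10 := congrFun (congrFun hfst 1) 0
  have h00 := congrFun (congrFun hfst 0) 0
  have h11 := congrFun (congrFun hfst 1) 1
  simp [Matrix.single, Matrix.one_apply] at h01 h10 h00 h11
  intro i
  fin_cases i <;> simp_all <;> linear_combination h11 + h00

/-! ### Main theorem -/

/-- `U(sl₂(ℂ))/I` is five-dimensional over `ℂ`, and the images of
`1, ι(e), ι(f), ι(h), ι(f)·ι(e)` form a `ℂ`-basis. -/
theorem stmt4 :
    Module.finrank ℂ Qsl2 = 5 ∧
    LinearIndependent ℂ basisFam ∧
    Submodule.span ℂ (Set.range basisFam) = ⊤ := by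
  refine ⟨?_, li_basisFam, span_basisFam_top⟩
  have b : Module.Basis (Fin 5) ℂ Qsl2 := Module.Basis.mk li_basisFam (by rw [span_basisFam_top])
  rw [Module.finrank_eq_card_basis b]
  simp
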